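/- arXiv:2102.04660 — 2 statements merged into one kernel-verified Lean document; each statement's English description precedes it below -/
import Mathlib

section
/- If a Merkle path verification for leaf y against root MR succeeds, and the compression hash is collision-resistant (modeled as injective), then y is indeed one of the leaves of the tree whose root is MR. -/
/-!
Induction on the height. A path of length `h + 1` turns `y` into its parent `f y s` or `f s y`,
and the rest of the path verifies that parent against the tree of height `h` whose leaves are the
hashes `f (l (2j)) (l (2j+1))` of adjacent pairs. By induction the parent is one of these, and
injectivity of `f` on pairs makes `y` one of the two children.
-/

def merkleRoot {α : Type} (f : α → α → α) : (h : ℕ) → (Fin (2 ^ h) → α) → α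
  | 0, l => l ⟨0, by norm_num⟩
  | h + 1, l =>
      merkleRoot f h fun i =>
        f (l ⟨2 * i.val, by have := i.isLt; rw [pow_succ]; omega⟩)
          (l ⟨2 * i.val + 1, by have := i.isLt; rw [pow_succ]; omega⟩)

def recomputeRoot {α : Type} (f : α → α → α) : ℕ → α → List α → α
  | _, y, [] => y
  | i, y, s :: rest =>
      recomputeRoot f (i / 2) (if i % 2 = 0 then f y s else f s y) rest

section

variable {α : Type} {f : α → α → α}

theorem eq_or_eq_of_hash_eq_ite (hf : Function.Injective fun p : α × α => f p.1 p.2)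
    {a b y s : α} (p : Prop) [Decidable p] (heq : (if p then f y s else f s y) = f a b) :
    y = a ∨ y = b := by
  split_ifs at heq
  · exact .inl (congrArg Prod.fst (hf (a₁ := (y, s)) (a₂ := (a, b)) heq))
  · exact .inr (congrArg Prod.snd (hf (a₁ := (s, y)) (a₂ := (a, b)) heq))

theorem mem_range_of_recomputeRoot_eq_merkleRoot
    (hf : Function.Injective fun p : α × α => f p.1 p.2) :
    ∀ (h : ℕ) (l : Fin (2 ^ h) → α) (i : ℕ) (y : α) (path : List α),
      path.length = h → recomputeRoot f i y path = merkleRoot f h l → y ∈ Set.range l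
  | 0, l, _, y, [], _, hverify => ⟨_, hverify.symm⟩
  | h + 1, l, i, y, s :: rest, hlen, hverify => by
    obtain ⟨j, hj⟩ := mem_range_of_recomputeRoot_eq_merkleRoot hf h _ (i / 2) _ rest
      (Nat.succ.inj hlen) hverify
    rcases eq_or_eq_of_hash_eq_ite hf (i % 2 = 0) hj.symm with rfl | rfl
    exacts [⟨_, rfl⟩, ⟨_, rfl⟩]

end

/-- If Merkle path verification of a leaf value `y` at position `i` against the
root `merkleRoot f h l` succeeds, and the compression function `f` is injective
(idealized collision resistance), then `y` really is one of the leaves `l`. -/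
theorem merkle_path_verification_sound {α : Type} (f : α → α → α)
    (hf : Function.Injective fun p : α × α => f p.1 p.2)
    (h : ℕ) (l : Fin (2 ^ h) → α) (i : Fin (2 ^ h)) (y : α) (path : List α)
    (hlen : path.length = h)
    (hverify : recomputeRoot f i.val y path = merkleRoot f h l) :
    ∃ j : Fin (2 ^ h), l j = y :=
  mem_range_of_recomputeRoot_eq_merkleRoot hf h l i y path hlen hverify
end

section
/- Suppose each withdrawal submitted at time t on one chain becomes visible on the other chain by time t + D, and withdrawals are only finalized after a processing delay of at least D + 1. Then if a user submits two withdrawals with the same nullifier sn (at times t₁ ≤ t₂, on either of the two chains), at the finalization time of the first withdrawal (t₁ + D + 1) both withdrawal events with nullifier sn are visible to the chain processing it, so the duplicate is detected and no two withdrawals with the same nullifier are both finalized. -/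
/-- A withdrawal event: the chain it was submitted on (two chains, modeled by
`Bool`), its nullifier, and its submission time. -/
structure WEvent (N : Type) where
  chain : Bool
  nullifier : N
  time : ℕ

/-- An event submitted at time `e.time` on chain `e.chain` is visible on its own
chain from time `e.time` on, and on the other chain from time `e.time + D` on. -/
def visible {N : Type} (D : ℕ) (e : WEvent N) (c : Bool) (t : ℕ) : Prop :=
  if e.chain = c then e.time ≤ t else e.time + D ≤ t

/-- A withdrawal event `e` (from the set `events`) is finalized, with processing
delay `D + 1`, iff at time `e.time + D + 1` no other event with the same
nullifier is visible on the finalizing chain `e.chain`. -/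
def finalized {N : Type} (D : ℕ) (events : Set (WEvent N)) (e : WEvent N) : Prop :=
  e ∈ events ∧ ∀ e' ∈ events, e' ≠ e → e'.nullifier = e.nullifier →
    ¬ visible D e' e.chain (e.time + D + 1)

theorem visible_of_time_add_le {N : Type} {D t : ℕ} {e : WEvent N} (c : Bool)
    (h : e.time + D ≤ t) : visible D e c t := by
  unfold visible
  split <;> omega

theorem visible_at_finalization_of_time_le {N : Type} (D : ℕ) {e e' : WEvent N}
    (h : e.time ≤ e'.time) : visible D e e'.chain (e'.time + D + 1) :=
  visible_of_time_add_le _ (by omega)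

theorem not_finalized_of_visible {N : Type} {D : ℕ} {events : Set (WEvent N)}
    {e e' : WEvent N} (he' : e' ∈ events) (hne : e' ≠ e) (hsn : e'.nullifier = e.nullifier)
    (hvis : visible D e' e.chain (e.time + D + 1)) : ¬ finalized D events e :=
  fun hfin => hfin.2 e' he' hne hsn hvis

theorem no_double_withdrawal_general {N : Type} (D : ℕ) (events : Set (WEvent N))
    (e₁ e₂ : WEvent N) (h₁ : e₁ ∈ events) (hne : e₁ ≠ e₂)
    (hsn : e₁.nullifier = e₂.nullifier) (horder : e₁.time ≤ e₂.time) :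
    ¬ (finalized D events e₁ ∧ finalized D events e₂) := fun ⟨_, hfin₂⟩ =>
  -- it is the later withdrawal whose check catches the earlier one, whichever chain each is on
  not_finalized_of_visible h₁ hne hsn (visible_at_finalization_of_time_le D horder) hfin₂

/-- With a processing delay of `D + 1`, no two distinct withdrawals with the same
nullifier (submitted at times `t₁ ≤ t₂`, on either chain) are both finalized:
the duplicate nullifier is detected. -/
theorem no_double_withdrawal {N : Type} (D : ℕ) (events : Set (WEvent N))
    (e₁ e₂ : WEvent N) (h₁ : e₁ ∈ events) (h₂ : e₂ ∈ events) (hne : e₁ ≠ e₂)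
    (hsn : e₁.nullifier = e₂.nullifier) (horder : e₁.time ≤ e₂.time) :
    ¬ (finalized D events e₁ ∧ finalized D events e₂) :=
  no_double_withdrawal_general D events e₁ e₂ h₁ hne hsn horder
end
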